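/- Let n ≥ 3. In the Artin group A(Ã_{n-1}), the reverse cycle relation fails: a_1·a_2⋯a_n · a_1·a_2⋯a_{n-2} ≠ a_2·a_3⋯a_n · a_1·a_2⋯a_{n-1}. -/

import Mathlib

/-
The group `A(Ã_{n-1})` acts on `ℤ` through the affine symmetric group: `a_i` moves the integers
`≡ i (mod n)` up by one and those `≡ i + 1` down by one, and these moves satisfy the braid and
commutation relations as soon as `n ≥ 3`. A product `a_k ⋯ a_{k+l-1}` slides a point of class
`k + l` down by `l`, and pushes a point of class `k + l - 1` up by one when `l < n`. So on `-1` the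
left-hand side acts as `-1 ↦ 1 - n ↦ 1 - 2n`, the right-hand side as `-1 ↦ 0 ↦ 1`.
-/

namespace Stmt6

/-- The braid relator `x y x (y x y)⁻¹` (weight 3). -/
def braidRel {γ : Type} (x y : FreeGroup γ) : FreeGroup γ := x * y * x * (y * x * y)⁻¹

/-- The commutation relator `x y (y x)⁻¹` (weight 2). -/
def commRel {γ : Type} (x y : FreeGroup γ) : FreeGroup γ := x * y * (y * x)⁻¹

/-- Relations of the Artin group `A(Ã_{n-1})`: the generator indexed by `i : Fin n`
is `a_{i+1}`; cyclically adjacent generators braid, all other pairs commute. -/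
def AtildeRels (n : ℕ) : Set (FreeGroup (Fin n)) :=
  { r | ∃ i j : Fin n,
      ((j : ℕ) = ((i : ℕ) + 1) % n ∧ r = braidRel (.of i) (.of j)) ∨
      (i ≠ j ∧ (j : ℕ) ≠ ((i : ℕ) + 1) % n ∧ (i : ℕ) ≠ ((j : ℕ) + 1) % n ∧
        r = commRel (.of i) (.of j)) }

/-- The Artin group `A(Ã_{n-1})`. -/
abbrev Atilde (n : ℕ) : Type := PresentedGroup (AtildeRels n)

/-- The standard generator `a_i` (for `1 ≤ i ≤ n`) of `A(Ã_{n-1})`. -/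
def a (n : ℕ) (i : ℕ) : Atilde n :=
  if h : 0 < n then PresentedGroup.of ⟨(i - 1) % n, Nat.mod_lt _ h⟩ else 1

/-- The ascending product `a_k · a_{k+1} ⋯ a_m` in `A(Ã_{n-1})`. -/
def aprod (n : ℕ) (k m : ℕ) : Atilde n :=
  ((List.range' k (m + 1 - k)).map (a n)).prod

section AffineSwap

variable {R : Type*} [Ring R] [DecidableEq R]

/-- The inverse tests the two residue classes in the opposite order, which only matters when
`1 = 0` in `R`; this way no hypothesis on `R` is needed to get a permutation. -/
def affineSwap (c : R) : Equiv.Perm ℤ where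
  toFun x := if (x : R) = c then x + 1 else if (x : R) = c + 1 then x - 1 else x
  invFun x := if (x : R) = c + 1 then x - 1 else if (x : R) = c then x + 1 else x
  left_inv x := by
    by_cases hx₀ : (x : R) = c
    · simp [hx₀]
    by_cases hx₁ : (x : R) = c + 1
    · simp_all
    · simp [hx₀, hx₁]
  right_inv x := by
    by_cases hx₁ : (x : R) = c + 1
    · simp [hx₁]
    by_cases hx₀ : (x : R) = c
    · simp_all
    · simp [hx₀, hx₁]

lemma affineSwap_apply_of_eq {c : R} {x : ℤ} (hx : (x : R) = c) : affineSwap c x = x + 1 :=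
  if_pos hx

lemma affineSwap_apply_of_eq_add_one [Nontrivial R] {c : R} {x : ℤ} (hx : (x : R) = c + 1) :
    affineSwap c x = x - 1 := by
  simp [affineSwap, hx]

lemma affineSwap_apply_of_ne {c : R} {x : ℤ} (hx₀ : (x : R) ≠ c) (hx₁ : (x : R) ≠ c + 1) :
    affineSwap c x = x := by
  simp [affineSwap, hx₀, hx₁]

lemma affineSwap_braid [Nontrivial R] (h2 : (2 : R) ≠ 0) (c : R) :
    affineSwap c * affineSwap (c + 1) * affineSwap c =
      affineSwap (c + 1) * affineSwap c * affineSwap (c + 1) := by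
  have e₁ : c + 1 ≠ c := by simp
  have e₁' : c + 1 + 1 ≠ c + 1 := by simp
  have e₂ : c + 1 + 1 ≠ c := by rw [add_assoc, one_add_one_eq_two]; simpa using h2
  ext x
  simp only [Equiv.Perm.mul_apply]
  by_cases hx₀ : (x : R) = c
  · simp [affineSwap, hx₀, e₁', e₂, e₁.symm, e₂.symm]
  by_cases hx₁ : (x : R) = c + 1
  · simp [affineSwap, hx₁, e₁, e₁', e₂, e₁.symm, e₂.symm]
  by_cases hx₂ : (x : R) = c + 1 + 1
  · simp [affineSwap, hx₂, e₁, e₁', e₂, e₁.symm, e₂.symm]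
  · simp [affineSwap, hx₀, hx₁, hx₂]

lemma affineSwap_commute [Nontrivial R] {c d : R} (hcd : c ≠ d) (hdc : d ≠ c + 1)
    (hcd' : c ≠ d + 1) : affineSwap c * affineSwap d = affineSwap d * affineSwap c := by
  have hcd'' : c + 1 ≠ d + 1 := fun h => hcd (add_right_cancel h)
  ext x
  simp only [Equiv.Perm.mul_apply]
  by_cases hx₀ : (x : R) = c
  · simp [affineSwap, hx₀, hcd, hcd', hdc.symm, hcd'']
  by_cases hx₁ : (x : R) = c + 1
  · simp [affineSwap, hx₁, hcd, hcd', hdc.symm, hcd'']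
  by_cases hy₀ : (x : R) = d
  · simp [affineSwap, hy₀, hcd.symm, hcd'.symm, hdc, hcd''.symm]
  by_cases hy₁ : (x : R) = d + 1
  · simp [affineSwap, hy₁, hcd.symm, hcd'.symm, hdc, hcd''.symm]
  · simp [affineSwap, hx₀, hx₁, hy₀, hy₁]

end AffineSwap

section AffineCycle

variable {n : ℕ}

lemma natCast_ne_natCast_of_lt_of_lt {a b : ℕ} (hab : a < b) (hba : b < a + n) :
    (a : ZMod n) ≠ b := by
  rw [Ne, ZMod.natCast_eq_natCast_iff, Nat.modEq_iff_dvd' hab.le]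
  exact fun h => absurd (Nat.le_of_dvd (Nat.sub_pos_of_lt hab) h) (by omega)

lemma natCast_eq_natCast_iff_eq_mod {a : ℕ} (ha : a < n) (b : ℕ) :
    (a : ZMod n) = b ↔ a = b % n := by
  rw [ZMod.natCast_eq_natCast_iff', Nat.mod_eq_of_lt ha]

def affineCycle (n k len : ℕ) : Equiv.Perm ℤ :=
  ((List.range' k len).map fun j : ℕ => affineSwap (j : ZMod n)).prod

lemma affineCycle_succ (k len : ℕ) :
    affineCycle n k (len + 1) = affineCycle n k len * affineSwap ((k + len : ℕ) : ZMod n) := by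
  simp [affineCycle, List.range'_concat]

lemma affineCycle_succ' (k len : ℕ) :
    affineCycle n k (len + 1) = affineSwap (k : ZMod n) * affineCycle n (k + 1) len := by
  simp [affineCycle, List.range'_succ]

lemma affineCycle_apply_eq_add_one_of_modEq {k len : ℕ} (hlen₀ : 0 < len) (hlen : len < n)
    {x : ℤ} (hx : x + 1 ≡ k + len [ZMOD n]) : affineCycle n k len x = x + 1 := by
  obtain ⟨len, rfl⟩ := Nat.exists_eq_add_one_of_ne_zero hlen₀.ne'
  have hx' : ((x + 1 : ℤ) : ZMod n) = ((k + len + 1 : ℕ) : ZMod n) := by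
    simpa [add_assoc] using (ZMod.intCast_eq_intCast_iff _ _ n).mpr hx
  have hfix : ∀ j ∈ List.range' k len, affineSwap (j : ZMod n) (x + 1) = x + 1 := by
    intro j hj
    obtain ⟨hkj, hjk⟩ := List.mem_range'_1.mp hj
    refine affineSwap_apply_of_ne ?_ ?_ <;> rw [hx']
    · exact (natCast_ne_natCast_of_lt_of_lt (by omega) (by omega)).symm
    · exact_mod_cast (natCast_ne_natCast_of_lt_of_lt (by omega) (by omega)).symm
  rw [affineCycle_succ, Equiv.Perm.mul_apply,
    affineSwap_apply_of_eq (by push_cast at hx' ⊢; linear_combination hx')]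
  exact (MulAction.stabilizer (Equiv.Perm ℤ) (x + 1)).list_prod_mem fun g hg => by
    obtain ⟨j, hj, rfl⟩ := List.mem_map.mp hg
    exact hfix j hj

lemma affineCycle_apply_eq_sub_of_modEq [Fact (1 < n)] {k len : ℕ} {x : ℤ}
    (hx : x ≡ k + len [ZMOD n]) : affineCycle n k len x = x - len := by
  induction len generalizing k with
  | zero => simp [affineCycle]
  | succ len ih =>
    have hx' : (x : ZMod n) = k + len + 1 := by
      simpa [add_assoc] using (ZMod.intCast_eq_intCast_iff _ _ n).mpr hx
    rw [affineCycle_succ', Equiv.Perm.mul_apply, ih (by convert hx using 1; push_cast; ring),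
      affineSwap_apply_of_eq_add_one (by push_cast; rw [hx']; ring)]
    push_cast
    ring

end AffineCycle

def affineGen (n : ℕ) (i : Fin n) : Equiv.Perm ℤ :=
  affineSwap (((i : ℕ) : ZMod n) + 1)

lemma affineGen_relators {n : ℕ} (hn : 3 ≤ n) :
    ∀ r ∈ AtildeRels n, FreeGroup.lift (affineGen n) r = 1 := by
  have : Fact (1 < n) := ⟨by omega⟩
  have h2 : (2 : ZMod n) ≠ 0 := by
    exact_mod_cast (natCast_ne_natCast_of_lt_of_lt (n := n) two_pos (by omega)).symm
  rintro r ⟨i, j, ⟨hij, rfl⟩ | ⟨hij, hji, hij', rfl⟩⟩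
  · have hj : ((j : ℕ) : ZMod n) = (i : ℕ) + 1 := by
      exact_mod_cast (natCast_eq_natCast_iff_eq_mod j.isLt _).mpr hij
    simp only [braidRel, map_mul, map_inv, FreeGroup.lift_apply_of, affineGen, hj, mul_inv_eq_one]
    exact affineSwap_braid h2 _
  · simp only [commRel, map_mul, map_inv, FreeGroup.lift_apply_of, affineGen, mul_inv_eq_one]
    refine affineSwap_commute (fun h => hij (Fin.ext ?_)) (fun h => hji ?_) (fun h => hij' ?_)
    · simpa [Nat.mod_eq_of_lt j.isLt] using
        (natCast_eq_natCast_iff_eq_mod i.isLt j).mp (add_right_cancel h)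
    · exact (natCast_eq_natCast_iff_eq_mod j.isLt _).mp (by exact_mod_cast add_right_cancel h)
    · exact (natCast_eq_natCast_iff_eq_mod i.isLt _).mp (by exact_mod_cast add_right_cancel h)

def affineRep {n : ℕ} (hn : 3 ≤ n) : Atilde n →* Equiv.Perm ℤ :=
  PresentedGroup.toGroup (affineGen_relators hn)

lemma affineRep_a {n : ℕ} (hn : 3 ≤ n) {j : ℕ} (hj : 1 ≤ j) :
    affineRep hn (a n j) = affineSwap (j : ZMod n) := by
  rw [a, dif_pos (by omega), affineRep, PresentedGroup.toGroup.of, affineGen]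
  rw [ZMod.natCast_mod, Nat.cast_sub hj, Nat.cast_one, sub_add_cancel]

lemma affineRep_aprod {n : ℕ} (hn : 3 ≤ n) {k : ℕ} (hk : 1 ≤ k) (m : ℕ) :
    affineRep hn (aprod n k m) = affineCycle n k (m + 1 - k) := by
  rw [aprod, map_list_prod, List.map_map, affineCycle]
  refine congrArg List.prod (List.map_congr_left fun j hj => ?_)
  exact affineRep_a hn (hk.trans (List.mem_range'_1.mp hj).1)

/-- For `n ≥ 3` the reverse cycle relation fails in `A(Ã_{n-1})`:
`a_1 ⋯ a_n · a_1 ⋯ a_{n-2} ≠ a_2 ⋯ a_n · a_1 ⋯ a_{n-1}`. -/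
theorem reverse_cycle_relation_fails (n : ℕ) (hn : 3 ≤ n) :
    aprod n 1 n * aprod n 1 (n - 2) ≠ aprod n 2 n * aprod n 1 (n - 1) := by
  have : Fact (1 < n) := ⟨by omega⟩
  intro h
  have hval := congrArg (fun g => affineRep hn g (-1)) h
  simp only [map_mul, Equiv.Perm.mul_apply, affineRep_aprod hn le_rfl,
    affineRep_aprod hn one_le_two] at hval
  rw [affineCycle_apply_eq_sub_of_modEq (x := -1) (Int.modEq_iff_dvd.mpr ⟨1, by omega⟩),
    affineCycle_apply_eq_sub_of_modEq (Int.modEq_iff_dvd.mpr ⟨2, by omega⟩),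
    affineCycle_apply_eq_add_one_of_modEq (by omega) (by omega) (x := -1)
      (Int.modEq_iff_dvd.mpr ⟨1, by omega⟩),
    affineCycle_apply_eq_add_one_of_modEq (by omega) (by omega)
      (Int.modEq_iff_dvd.mpr ⟨1, by omega⟩)] at hval
  omega

end Stmt6
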